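/- Let g : ℝ × ℝ → ℝ be a real polynomial in two variables of total degree at most q. Let y_1,...,y_m be vectors in ℝ^N, let x_0,...,x_{n-1} be vectors in ℝ^N each lying in the span of y_1,...,y_m, and fix an index i ∈ {1,...,N}. Then the n×N real matrix F_i with (k,j)-entry g((x_k)_i, (x_k)_j) has rank at most Σ_{β=0}^{q} C(β+m-1, m-1). -/
import Mathlib

/-- Stars-and-bars style inequality used for counting monomials. -/
lemma choose_aux (m β : ℕ) : (m + β - 1).choose β ≤ (β + m - 1).choose (m - 1) := by
  cases m with
  | zero =>
    simp only [Nat.zero_add, Nat.add_zero, Nat.zero_sub, Nat.sub_zero]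
    cases β with
    | zero => simp
    | succ b =>
      have : (b + 1 - 1).choose (b + 1) = 0 := by
        apply Nat.choose_eq_zero_of_lt
        omega
      simp [this]
  | succ m' =>
    have h1 : m' + 1 + β - 1 = β + m' := by omega
    have h2 : β + (m' + 1) - 1 = β + m' := by omega
    have h3 : m' + 1 - 1 = m' := by omega
    rw [h1, h2, h3]
    have := Nat.choose_symm (n := β + m') (k := m') (by omega)
    have h4 : β + m' - m' = β := by omega
    rw [h4] at this
    exact le_of_eq this

/-- **Rank bound for the interaction matrix with polynomial interaction function.**
If the interaction function `g(u,v)` is a real polynomial in two variables of total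
degree at most `q`, and every observed nodal state `x k` lies in the span of `m`
vectors `y_1, ..., y_m`, then the matrix `F_i` with entries `g((x_k)_i, (x_k)_j)`
has rank at most `∑_{β=0}^{q} C(β+m-1, m-1)`. -/
theorem rank_polynomial_interaction_matrix_le
    (N n m q : ℕ) (i : Fin N)
    (g : ℝ → ℝ → ℝ) (P : MvPolynomial (Fin 2) ℝ)
    (hdeg : P.totalDegree ≤ q)
    (hg : ∀ u v : ℝ, g u v = MvPolynomial.eval ![u, v] P)
    (y : Fin m → (Fin N → ℝ))
    (x : Fin n → (Fin N → ℝ))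
    (hx : ∀ k, x k ∈ Submodule.span ℝ (Set.range y))
    (F : Matrix (Fin n) (Fin N) ℝ)
    (hF : ∀ k j, F k j = g (x k i) (x k j)) :
    F.rank ≤ ∑ β ∈ Finset.range (q + 1), Nat.choose (β + m - 1) (m - 1) := by
  classical
  -- coefficients expressing each `x k` in terms of the `y l`
  choose c hc using fun k => (Submodule.mem_span_range_iff_exists_fun ℝ).mp (hx k)
  -- monomial functions
  set mono : Multiset (Fin m) → (Fin N → ℝ) :=
    fun t j => (t.map fun l => y l j).prod with hmono
  -- the spanning finset
  set S : Finset (Fin N → ℝ) :=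
    (Finset.range (q + 1)).biUnion
      (fun β => (Finset.univ : Finset (Sym (Fin m) β)).image (fun s => mono s.1)) with hS
  have hxkj : ∀ k j, x k j = ∑ l, c k l * y l j := by
    intro k j
    have := congrFun (hc k) j
    simpa [Finset.sum_apply] using this.symm
  -- each power function lies in the span of degree-`b` monomials
  have hpow : ∀ (k : Fin n) (b : ℕ),
      (fun j => x k j ^ b) ∈ Submodule.span ℝ
        (((Finset.univ : Finset (Sym (Fin m) b)).image (fun s => mono s.1) : Finset _) :
          Set (Fin N → ℝ)) := by
    intro k b
    induction b with
    | zero =>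
      apply Submodule.subset_span
      refine Finset.mem_coe.mpr (Finset.mem_image.mpr ⟨⟨0, rfl⟩, Finset.mem_univ _, ?_⟩)
      funext j
      simp [hmono]
    | succ b ih =>
      have key : (fun j => x k j ^ (b + 1)) =
          LinearMap.mulLeft ℝ (x k) (fun j => x k j ^ b) := by
        funext j
        simp [LinearMap.mulLeft_apply, pow_succ]
        ring
      rw [key]
      have hmap := Submodule.mem_map_of_mem (f := LinearMap.mulLeft ℝ (x k)) ih
      rw [Submodule.map_span] at hmap
      refine Submodule.span_le.mpr ?_ hmap
      rintro _ ⟨v, hv, rfl⟩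
      obtain ⟨s, -, rfl⟩ := Finset.mem_image.mp (Finset.mem_coe.mp hv)
      -- `x k * mono s = ∑ l, c k l • mono (l ::ₘ s)`
      have hexp : LinearMap.mulLeft ℝ (x k) (mono s.1) =
          ∑ l, c k l • mono (l ::ₘ s.1) := by
        funext j
        simp only [LinearMap.mulLeft_apply, Pi.mul_apply, Finset.sum_apply,
          Pi.smul_apply, smul_eq_mul, hmono, Multiset.map_cons, Multiset.prod_cons]
        rw [hxkj k j, Finset.sum_mul]
        apply Finset.sum_congr rfl
        intro l _
        ring
      rw [hexp]
      refine Submodule.sum_mem _ ?_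
      intro l _
      refine Submodule.smul_mem _ _ (Submodule.subset_span ?_)
      refine Finset.mem_coe.mpr (Finset.mem_image.mpr ⟨l ::ₛ s, Finset.mem_univ _, ?_⟩)
      rfl
  -- every row of `F` lies in the span of `S`
  have hrow : ∀ k, F k ∈ Submodule.span ℝ (S : Set (Fin N → ℝ)) := by
    intro k
    have hFk : F k = ∑ e ∈ P.support,
        (P.coeff e * x k i ^ (e 0)) • (fun j => x k j ^ (e 1)) := by
      funext j
      rw [show F k j = g (x k i) (x k j) from hF k j, hg,
        MvPolynomial.eval_eq']
      simp only [Finset.sum_apply, Pi.smul_apply, smul_eq_mul]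
      apply Finset.sum_congr rfl
      intro e _
      rw [Fin.prod_univ_two]
      simp [mul_assoc]
    rw [hFk]
    refine Submodule.sum_mem _ ?_
    intro e he
    refine Submodule.smul_mem _ _ ?_
    have he1 : e 1 ≤ q := by
      refine le_trans ?_ (le_trans (MvPolynomial.le_totalDegree he) hdeg)
      have : (e.sum fun _ v => v) = ∑ r, e r := Finsupp.sum_fintype _ _ (fun _ => rfl)
      rw [this, Fin.sum_univ_two]
      omega
    refine Submodule.span_mono ?_ (hpow k (e 1))
    intro v hv
    refine Finset.mem_coe.mpr (Finset.mem_biUnion.mpr ⟨e 1, ?_, Finset.mem_coe.mp hv⟩)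
    exact Finset.mem_range.mpr (by omega)
  -- conclude via the row space
  rw [Matrix.rank_eq_finrank_span_row]
  have h1 : Submodule.span ℝ (Set.range F) ≤ Submodule.span ℝ (S : Set (Fin N → ℝ)) := by
    rw [Submodule.span_le]
    rintro _ ⟨k, rfl⟩
    exact hrow k
  refine le_trans (Submodule.finrank_mono h1) ?_
  refine le_trans (finrank_span_finset_le_card S) ?_
  refine le_trans (Finset.card_biUnion_le) ?_
  refine Finset.sum_le_sum ?_
  intro β _
  refine le_trans Finset.card_image_le ?_
  rw [Finset.card_univ]
  have hcard : Fintype.card (Sym (Fin m) β) = (m + β - 1).choose β := by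
    rw [Sym.card_sym_eq_choose, Fintype.card_fin]
  rw [hcard]
  exact choose_aux m β
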